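/- arXiv:1410.4118 — 5 statements merged into one kernel-verified Lean document; each statement's English description precedes it below -/
import Mathlib

section
/- Let G be a graph, let C be a clique of G of maximum size (i.e., |C| = ω(G)) with C nonempty, and let A be a set of vertices disjoint from C such that every vertex of C has a neighbour in A. Then there exist distinct vertices a1, a2 ∈ A and distinct vertices c1, c2 ∈ C such that a1 is adjacent to c1 but not to c2, and a2 is adjacent to c2 but not to c1. -/
open SimpleGraph

universe u

variable {V : Type u}

/-- The independence (stability) number of a graph. -/
noncomputable def indepNum (G : SimpleGraph V) : ℕ :=
  sSup {n | ∃ s : Finset V, s.card = n ∧ ∀ x ∈ s, ∀ y ∈ s, x ≠ y → ¬ G.Adj x y}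

/-- A walk is induced: any edge of `G` between vertices of the walk is an edge of the walk. -/
def IsInducedWalk (G : SimpleGraph V) {u v : V} (p : G.Walk u v) : Prop :=
  ∀ x ∈ p.support, ∀ y ∈ p.support, G.Adj x y → p.toSubgraph.Adj x y

/-- An induced path. -/
def IsInducedPath (G : SimpleGraph V) {u v : V} (p : G.Walk u v) : Prop :=
  p.IsPath ∧ IsInducedWalk G p

/-- An odd hole: an induced cycle of odd length at least 5. -/
def HasOddHole (G : SimpleGraph V) : Prop :=
  ∃ (v : V) (p : G.Walk v v), p.IsCycle ∧ IsInducedWalk G p ∧ Odd p.length ∧ 5 ≤ p.length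

/-- A cograph: no induced path on four vertices. -/
def IsCograph (G : SimpleGraph V) : Prop :=
  ¬ ∃ a b c d : V, a ≠ c ∧ a ≠ d ∧ b ≠ d ∧
    G.Adj a b ∧ G.Adj b c ∧ G.Adj c d ∧ ¬ G.Adj a c ∧ ¬ G.Adj a d ∧ ¬ G.Adj b d

/-- A levelling `(L 0, …, L k)` in `G`. -/
def IsLevelling (G : SimpleGraph V) (k : ℕ) (L : ℕ → Set V) : Prop :=
  (∀ i j, i ≤ k → j ≤ k → i ≠ j → Disjoint (L i) (L j)) ∧
  (∃ x, L 0 = {x}) ∧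
  (∀ i, 1 ≤ i → i ≤ k → ∀ v ∈ L i,
     (∃ u ∈ L (i - 1), G.Adj u v) ∧ (∀ h, h + 1 < i → ∀ u ∈ L h, ¬ G.Adj u v))

/-- The interior (internal vertices) of a walk is contained in `S`. -/
def InteriorIn (G : SimpleGraph V) {u v : V} (p : G.Walk u v) (S : Set V) : Prop :=
  ∀ x ∈ p.support, x ≠ u → x ≠ v → x ∈ S

/-- The union `L 0 ∪ ⋯ ∪ L (k-1)`. -/
def lowerLevels (L : ℕ → Set V) (k : ℕ) : Set V := ⋃ i ∈ Finset.range k, L i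

/-- There is an odd induced path between `u` and `v` with interior in the lower levels. -/
def OddConn (G : SimpleGraph V) (L : ℕ → Set V) (k : ℕ) (u v : V) : Prop :=
  u ≠ v ∧ ∃ p : G.Walk u v, IsInducedPath G p ∧ Odd p.length ∧
    InteriorIn G p (lowerLevels L k)

/-- `w ∈ L (i+1)` is a dependent of `u ∈ L i`: `u` is its only parent. -/
def IsDependent (G : SimpleGraph V) (L : ℕ → Set V) (i : ℕ) (u w : V) : Prop :=
  w ∈ L (i + 1) ∧ G.Adj u w ∧ ∀ x ∈ L i, G.Adj x w → x = u


namespace SimpleGraph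

variable {α : Type*} {G : SimpleGraph α}

/-- `cliqueNum` is the `sSup` of the clique sizes, which takes the junk value `0` when cliques
are arbitrarily large (possible only in infinite graphs). -/
lemma IsClique.card_le_cliqueNum_of_cliqueNum_ne_zero {t : Finset α} (ht : G.IsClique t)
    (h : G.cliqueNum ≠ 0) : t.card ≤ G.cliqueNum := by
  have hbdd : BddAbove {n | ∃ s, G.IsNClique n s} := by
    by_contra hunb
    exact h (Nat.sSup_of_not_bddAbove hunb)
  exact le_csSup hbdd ⟨t, ht, rfl⟩

lemma IsNClique.exists_not_adj_of_notMem {C : Finset α} {a : α}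
    (hC : G.IsNClique G.cliqueNum C) (hCne : C.Nonempty) (ha : a ∉ C) :
    ∃ c ∈ C, ¬ G.Adj a c := by
  classical
  by_contra! hall
  have hclique : G.IsClique (insert a C : Finset α) := by
    rw [Finset.coe_insert]
    exact hC.isClique.insert fun c hc _ => hall c hc
  have hle := hclique.card_le_cliqueNum_of_cliqueNum_ne_zero (hC.card_eq ▸ hCne.card_pos.ne')
  rw [Finset.card_insert_of_notMem ha, hC.card_eq] at hle
  omega

end SimpleGraph

/-- Take `a₁` whose trace `{c ∈ C | R a₁ c}` is largest; a covering `a₂` of a point missed by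
`a₁` cannot have a trace containing that of `a₁`. -/
lemma exists_incomparable_of_cover_of_proper {α β : Type*} {R : α → β → Prop} {A : Set α}
    {C : Finset β} (hCne : C.Nonempty) (hcover : ∀ c ∈ C, ∃ a ∈ A, R a c)
    (hproper : ∀ a ∈ A, ∃ c ∈ C, ¬ R a c) :
    ∃ a₁ ∈ A, ∃ a₂ ∈ A, ∃ c₁ ∈ C, ∃ c₂ ∈ C, R a₁ c₁ ∧ ¬ R a₁ c₂ ∧ R a₂ c₂ ∧ ¬ R a₂ c₁ := by
  classical
  set trace : α → Finset β := fun a => C.filter (R a)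
  have htraces : (trace '' A).Finite :=
    C.powerset.finite_toSet.subset <| by
      rintro _ ⟨a, -, rfl⟩
      exact Finset.mem_powerset.mpr (C.filter_subset (R a))
  obtain ⟨c, hc⟩ := hCne
  obtain ⟨a, ha, -⟩ := hcover c hc
  obtain ⟨_, ⟨a₁, ha₁, rfl⟩, hmax⟩ :=
    Set.exists_max_image _ Finset.card htraces ⟨trace a, a, ha, rfl⟩
  obtain ⟨c₂, hc₂, hnot₁₂⟩ := hproper a₁ ha₁
  obtain ⟨a₂, ha₂, h₂₂⟩ := hcover c₂ hc₂
  obtain ⟨c₁, hc₁, h₁₁, hnot₂₁⟩ : ∃ c₁ ∈ C, R a₁ c₁ ∧ ¬ R a₂ c₁ := by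
    by_contra! hsub
    have hssub : trace a₁ ⊂ trace a₂ := by
      refine Finset.ssubset_iff_of_subset ?_ |>.mpr ⟨c₂, ?_, ?_⟩
      · intro c hc
        simp only [trace, Finset.mem_filter] at hc ⊢
        exact ⟨hc.1, hsub c hc.1 hc.2⟩
      · simpa [trace] using ⟨hc₂, h₂₂⟩
      · simpa [trace] using fun _ => hnot₁₂
    exact (Finset.card_lt_card hssub).not_ge (hmax _ ⟨a₂, ha₂, rfl⟩)
  exact ⟨a₁, ha₁, a₂, ha₂, c₁, hc₁, c₂, hc₂, h₁₁, hnot₁₂, h₂₂, hnot₂₁⟩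

theorem stmt0_general (G : SimpleGraph V) (C : Finset V) (A : Set V)
    (hC : G.IsNClique (G.cliqueNum) C) (hCne : C.Nonempty)
    (hdisj : ∀ a ∈ A, a ∉ C)
    (hnbr : ∀ c ∈ C, ∃ a ∈ A, G.Adj c a) :
    ∃ a₁ ∈ A, ∃ a₂ ∈ A, ∃ c₁ ∈ C, ∃ c₂ ∈ C,
      a₁ ≠ a₂ ∧ c₁ ≠ c₂ ∧ G.Adj a₁ c₁ ∧ ¬ G.Adj a₁ c₂ ∧ G.Adj a₂ c₂ ∧ ¬ G.Adj a₂ c₁ := by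
  obtain ⟨a₁, ha₁, a₂, ha₂, c₁, hc₁, c₂, hc₂, h₁₁, h₁₂, h₂₂, h₂₁⟩ :=
    exists_incomparable_of_cover_of_proper (R := G.Adj) hCne
      (fun c hc => (hnbr c hc).imp fun _ ⟨ha, hadj⟩ => ⟨ha, hadj.symm⟩)
      (fun a ha => hC.exists_not_adj_of_notMem hCne (hdisj a ha))
  refine ⟨a₁, ha₁, a₂, ha₂, c₁, hc₁, c₂, hc₂, ?_, ?_, h₁₁, h₁₂, h₂₂, h₂₁⟩
  · rintro rfl
    exact h₁₂ h₂₂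
  · rintro rfl
    exact h₁₂ h₁₁

theorem stmt0 [Fintype V] (G : SimpleGraph V) (C : Finset V) (A : Set V)
    (hC : G.IsNClique (G.cliqueNum) C) (hCne : C.Nonempty)
    (hdisj : ∀ a ∈ A, a ∉ C)
    (hnbr : ∀ c ∈ C, ∃ a ∈ A, G.Adj c a) :
    ∃ a₁ ∈ A, ∃ a₂ ∈ A, ∃ c₁ ∈ C, ∃ c₂ ∈ C,
      a₁ ≠ a₂ ∧ c₁ ≠ c₂ ∧ G.Adj a₁ c₁ ∧ ¬ G.Adj a₁ c₂ ∧ G.Adj a₂ c₂ ∧ ¬ G.Adj a₂ c₁ :=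
  stmt0_general G C A hC hCne hdisj hnbr
end

section
/- If H is a cograph with more than one vertex, then there is a partition of V(H) into two nonempty sets A1, A2 such that either every vertex of A1 is adjacent to every vertex of A2, or no vertex of A1 is adjacent to any vertex of A2. -/
open SimpleGraph

universe u

variable {V : Type u}

/-!
Seinsche's theorem: a cograph `G` on at least two vertices has `G` or `Gᶜ` disconnected.
By induction on the number of vertices, suppose `G` and `Gᶜ` are both connected. For a vertex `v`,
if `G - v` were disconnected, `v` would be adjacent to every other vertex (otherwise an edge
between a non-neighbour and a neighbour of `v` in one component, followed by `v` and a neighbour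
in another component, is an induced `P₄`), so `v` would be isolated in `Gᶜ`. Hence `G - v` and,
symmetrically, `Gᶜ - v = (G - v)ᶜ` are both connected; as `v` has both a neighbour and a
non-neighbour, `G - v` has two vertices and this contradicts the induction hypothesis.
A component of the disconnected graph gives the partition.
-/

namespace SimpleGraph

variable {G : SimpleGraph V}

theorem induce_compl (s : Set V) : Gᶜ.induce s = (G.induce s)ᶜ := by
  ext x y
  simp [Subtype.coe_injective.ne_iff]

theorem Walk.exists_adj_reachable_induce_compl_singleton {x v : V} (p : G.Walk x v)
    (hx : x ∈ ({v}ᶜ : Set V)) :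
    ∃ u : ({v}ᶜ : Set V), G.Adj v u ∧ (G.induce {v}ᶜ).Reachable ⟨x, hx⟩ u := by
  induction p with
  | nil => exact absurd rfl hx
  | @cons x y v hxy q ih =>
    by_cases hy : y = v
    · subst hy
      exact ⟨⟨x, hx⟩, hxy.symm, .rfl⟩
    · obtain ⟨u, hvu, hyu⟩ := ih hy
      exact ⟨u, hvu, (show (G.induce {v}ᶜ).Adj ⟨x, hx⟩ ⟨y, hy⟩ from hxy).reachable.trans hyu⟩

theorem exists_ne_not_adj_of_preconnected_compl [Nontrivial V] (hG : Gᶜ.Preconnected) (v : V) :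
    ∃ w, w ≠ v ∧ ¬G.Adj v w := by
  obtain ⟨u, huv⟩ := exists_ne v
  obtain ⟨w, hvw⟩ := (hG v u).nonempty_neighborSet_left huv.symm
  exact ⟨w, hvw.1.symm, hvw.2⟩

theorem exists_partition_of_not_preconnected (h : ¬G.Preconnected) :
    ∃ A : Set V, A.Nonempty ∧ Aᶜ.Nonempty ∧ ∀ x ∈ A, ∀ y ∈ Aᶜ, ¬G.Adj x y := by
  obtain ⟨a, b, hab⟩ : ∃ a b, ¬G.Reachable a b := by simpa [Preconnected] using h
  exact ⟨{x | G.Reachable a x}, ⟨a, .rfl⟩, ⟨b, hab⟩,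
    fun x hx y hy hxy => hy (hx.trans hxy.reachable)⟩

end SimpleGraph

namespace IsCograph

variable {G : SimpleGraph V}

theorem compl (hG : IsCograph G) : IsCograph Gᶜ := by
  rintro ⟨a, b, c, d, hac, had, hbd, hab, hbc, hcd, nac, nad, nbd⟩
  rw [compl_adj] at hab hbc hcd
  simp only [compl_adj, not_and, not_not] at nac nad nbd
  exact hG ⟨b, d, a, c, hab.1.symm, hbc.1, hcd.1.symm, nbd hbd, (nad had).symm, nac hac,
    fun h => hab.2 h.symm, hbc.2, fun h => hcd.2 h.symm⟩

theorem induce (hG : IsCograph G) (s : Set V) : IsCograph (G.induce s) := by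
  rintro ⟨a, b, c, d, hac, had, hbd, h⟩
  exact hG ⟨a, b, c, d, Subtype.coe_injective.ne hac, Subtype.coe_injective.ne had,
    Subtype.coe_injective.ne hbd, h⟩

/-- If `x y` is an edge of `G - v` from a non-neighbour to a neighbour of `v`, and `z` is a
neighbour of `v` in another component of `G - v`, then `x y v z` is an induced `P₄`. -/
theorem preconnected_induce_compl_singleton (hG : IsCograph G) (hconn : G.Preconnected) {v w : V}
    (hwv : w ≠ v) (hvw : ¬G.Adj v w) : (G.induce {v}ᶜ).Preconnected := by
  by_contra hdis
  obtain ⟨u, hvu, ⟨p⟩⟩ := (hconn w v).some.exists_adj_reachable_induce_compl_singleton hwv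
  obtain ⟨d, -, hx, hy⟩ := p.exists_boundary_dart {x | ¬G.Adj v x} hvw (not_not.2 hvu)
  obtain ⟨c, hxc⟩ : ∃ c, ¬(G.induce {v}ᶜ).Reachable d.fst c := by
    by_contra! h
    exact hdis fun a b => (h a).symm.trans (h b)
  obtain ⟨z, hvz, hcz⟩ := (hconn c v).some.exists_adj_reachable_induce_compl_singleton c.2
  have hxz : ¬(G.induce {v}ᶜ).Reachable d.fst z := fun h => hxc (h.trans hcz.symm)
  have hyz : ¬(G.induce {v}ᶜ).Reachable d.snd z := fun h => hxz (d.adj.reachable.trans h)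
  refine hG ⟨d.fst, d.snd, v, z, d.fst.2, fun h => hxz (by rw [Subtype.coe_injective h]),
    fun h => hyz (by rw [Subtype.coe_injective h]), d.adj, (not_not.1 hy).symm, hvz,
    fun h => hx h.symm, fun h => hxz (Adj.reachable h), fun h => hyz (Adj.reachable h)⟩

theorem not_preconnected_or_not_preconnected_compl [Finite V] [Nontrivial V] (hG : IsCograph G) :
    ¬G.Preconnected ∨ ¬Gᶜ.Preconnected := by
  induction h : Nat.card V using Nat.strong_induction_on generalizing V with
  | _ n ih =>
  rw [← not_and_or]
  rintro ⟨hconn, hconn'⟩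
  obtain ⟨v⟩ := ‹Nontrivial V›.to_nonempty
  obtain ⟨w, hwv, hvw⟩ := exists_ne_not_adj_of_preconnected_compl hconn' v
  obtain ⟨u, huv, hvu⟩ := exists_ne_not_adj_of_preconnected_compl (compl_compl G ▸ hconn) v
  have hind : (G.induce {v}ᶜ).Preconnected := hG.preconnected_induce_compl_singleton hconn hwv hvw
  have hind' : (G.induce {v}ᶜ)ᶜ.Preconnected := by
    rw [← induce_compl]
    exact hG.compl.preconnected_induce_compl_singleton hconn' huv hvu
  have hwu : w ≠ u := by
    rintro rfl
    exact hvu ⟨huv.symm, hvw⟩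
  have : Nontrivial ({v}ᶜ : Set V) := ⟨⟨w, hwv⟩, ⟨u, huv⟩, fun h => hwu congr($h.1)⟩
  have hlt : Nat.card ({v}ᶜ : Set V) < n := h ▸ Finite.card_subtype_lt (fun h => h rfl)
  exact not_and_or.2 (ih _ hlt (hG.induce _) rfl) ⟨hind, hind'⟩

end IsCograph

theorem stmt1 [Fintype V] (H : SimpleGraph V) (hcard : 1 < Fintype.card V)
    (hco : IsCograph H) :
    ∃ A : Set V, A.Nonempty ∧ Aᶜ.Nonempty ∧
      ((∀ x ∈ A, ∀ y ∈ Aᶜ, H.Adj x y) ∨ (∀ x ∈ A, ∀ y ∈ Aᶜ, ¬ H.Adj x y)) := by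
  have : Nontrivial V := Fintype.one_lt_card_iff_nontrivial.mp hcard
  rcases hco.not_preconnected_or_not_preconnected_compl with h | h
  · obtain ⟨A, hA, hAc, hsep⟩ := exists_partition_of_not_preconnected h
    exact ⟨A, hA, hAc, .inr hsep⟩
  · obtain ⟨A, hA, hAc, hsep⟩ := exists_partition_of_not_preconnected h
    refine ⟨A, hA, hAc, .inl fun x hx y hy => ?_⟩
    by_contra hxy
    exact hsep x hx y hy ⟨fun h => hy (h ▸ hx), hxy⟩
end

section
/- Under the hypotheses of the previous theorem (A stable, every vertex of B having a neighbour in A, and a cograph H on A encoding parities of A-paths), if moreover C ⊆ B is a clique of size ω(G), M ⊆ A, and every vertex of C has a neighbour in M, then no vertex of C is adjacent to all of M. -/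
open SimpleGraph

universe u

variable {V : Type u}

/-!
Suppose `v ∈ C` is adjacent to all of `M`. Any two vertices of `M` are then joined by the
induced path through `v`, of length two, so `M` is stable in `H`. An induced path
`m - c - c' - m'` with `c, c' ∈ C` and `m, m' ∈ M` would have odd length and force `m, m'` to be
`H`-adjacent; hence the traces on `M` of the neighbourhoods of the vertices of `C` form a chain.
The smallest of them is nonempty, so some `m ∈ M` is adjacent to all of `C`, and `C + m` is a
clique of size `ω(G) + 1`.
-/

section InducedPaths

variable {G : SimpleGraph V}

theorem isInducedPath_cons_cons_nil {a b c : V} (hab : G.Adj a b) (hbc : G.Adj b c)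
    (hac : ¬ G.Adj a c) (hne : a ≠ c) :
    IsInducedPath G (.cons hab (.cons hbc .nil)) := by
  refine ⟨by simp [Walk.isPath_def, hab.ne, hbc.ne, hne], fun x hx y hy hxy => ?_⟩
  rw [Walk.adj_toSubgraph_iff_mem_edges]
  simp only [Walk.support_cons, Walk.support_nil, List.mem_cons, List.not_mem_nil,
    or_false] at hx hy
  rcases hx with rfl | rfl | rfl <;> rcases hy with rfl | rfl | rfl <;>
    simp_all [hxy.symm]

theorem isInducedPath_cons_cons_cons_nil {a b c d : V} (hab : G.Adj a b) (hbc : G.Adj b c)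
    (hcd : G.Adj c d) (hac : ¬ G.Adj a c) (had : ¬ G.Adj a d) (hbd : ¬ G.Adj b d)
    (hne_ac : a ≠ c) (hne_ad : a ≠ d) (hne_bd : b ≠ d) :
    IsInducedPath G (.cons hab (.cons hbc (.cons hcd .nil))) := by
  refine ⟨by simp [Walk.isPath_def, hab.ne, hbc.ne, hcd.ne, hne_ac, hne_ad, hne_bd],
    fun x hx y hy hxy => ?_⟩
  rw [Walk.adj_toSubgraph_iff_mem_edges]
  simp only [Walk.support_cons, Walk.support_nil, List.mem_cons, List.not_mem_nil,
    or_false] at hx hy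
  rcases hx with rfl | rfl | rfl | rfl <;> rcases hy with rfl | rfl | rfl | rfl <;>
    simp_all [hxy.symm]

theorem interiorIn_cons_cons_nil {a b c : V} (hab : G.Adj a b) (hbc : G.Adj b c) {S : Set V}
    (hb : b ∈ S) : InteriorIn G (.cons hab (.cons hbc .nil)) S := by
  intro x hx hxa hxc
  simp_all

theorem interiorIn_cons_cons_cons_nil {a b c d : V} (hab : G.Adj a b) (hbc : G.Adj b c)
    (hcd : G.Adj c d) {S : Set V} (hb : b ∈ S) (hc : c ∈ S) :
    InteriorIn G (.cons hab (.cons hbc (.cons hcd .nil))) S := by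
  intro x hx hxa hxd
  simp only [Walk.support_cons, Walk.support_nil, List.mem_cons, List.not_mem_nil,
    or_false] at hx
  rcases hx with rfl | rfl | rfl | rfl <;> simp_all

end InducedPaths

theorem Finset.exists_forall_mem_of_pairwise_subset_or_subset {ι α : Type*} {s : Finset ι}
    (hs : s.Nonempty) (N : ι → Set α) (hne : ∀ i ∈ s, (N i).Nonempty)
    (hcomp : ∀ i ∈ s, ∀ j ∈ s, i ≠ j → N i ⊆ N j ∨ N j ⊆ N i) :
    ∃ a, ∀ i ∈ s, a ∈ N i := by
  obtain ⟨i, hi, hmin⟩ := s.exists_minimalFor N hs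
  have hsub : ∀ j ∈ s, N i ⊆ N j := by
    intro j hj
    obtain rfl | hij := eq_or_ne i j
    · rfl
    exact (hcomp i hi j hj hij).elim id (hmin hj)
  obtain ⟨a, ha⟩ := hne i hi
  exact ⟨a, fun j hj => hsub j hj ha⟩

theorem SimpleGraph.IsNClique.not_forall_adj_of_cliqueNum [Finite V] {G : SimpleGraph V}
    {C : Finset V} (hC : G.IsNClique G.cliqueNum C) (a : V) : ¬ ∀ c ∈ C, G.Adj a c := by
  classical
  intro ha
  have := (hC.insert ha).isClique.card_le_cliqueNum
  rw [(hC.insert ha).card_eq] at this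
  omega

section ParityEncoding

variable {G H : SimpleGraph V} {A : Set V}
  (hstable : ∀ x ∈ A, ∀ y ∈ A, ¬ G.Adj x y)
  (hpar : ∀ u v : V, u ∈ A → v ∈ A → u ≠ v → ∀ p : G.Walk u v,
    IsInducedPath G p → InteriorIn G p Aᶜ → (H.Adj u v ↔ Odd p.length))
include hstable hpar

theorem not_adj_of_commonNeighbor {m m' v : V} (hm : m ∈ A) (hm' : m' ∈ A) (hv : v ∉ A)
    (hne : m ≠ m') (hvm : G.Adj v m) (hvm' : G.Adj v m') : ¬ H.Adj m m' := by
  intro hH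
  have hpath := isInducedPath_cons_cons_nil hvm.symm hvm' (hstable m hm m' hm') hne
  exact Nat.not_odd_iff_even.2 even_two
    ((hpar m m' hm hm' hne _ hpath (interiorIn_cons_cons_nil _ _ hv)).mp hH)

theorem adj_of_inducedP4 {m c c' m' : V} (hm : m ∈ A) (hm' : m' ∈ A) (hc : c ∉ A)
    (hc' : c' ∉ A) (hcm : G.Adj c m) (hcc' : G.Adj c c') (hc'm' : G.Adj c' m')
    (hc'm : ¬ G.Adj c' m) (hcm' : ¬ G.Adj c m') : H.Adj m m' := by
  have hne : m ≠ m' := by rintro rfl; exact hcm' hcm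
  have hpath := isInducedPath_cons_cons_cons_nil hcm.symm hcc' hc'm'
    (fun h => hc'm h.symm) (hstable m hm m' hm') hcm' (by rintro rfl; exact hc' hm) hne
    (by rintro rfl; exact hc hm')
  exact (hpar m m' hm hm' hne _ hpath (interiorIn_cons_cons_cons_nil _ _ _ hc hc')).mpr
    ⟨1, rfl⟩

theorem neighborSet_inter_subset_or_subset {M : Set V} (hM : M ⊆ A) {v c c' : V} (hv : v ∉ A)
    (hvM : ∀ m ∈ M, G.Adj v m) (hc : c ∉ A) (hc' : c' ∉ A) (hcc' : G.Adj c c') :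
    M ∩ G.neighborSet c ⊆ M ∩ G.neighborSet c' ∨ M ∩ G.neighborSet c' ⊆ M ∩ G.neighborSet c := by
  rw [or_iff_not_imp_left, Set.not_subset]
  rintro ⟨m, ⟨hmM, hcm⟩, hc'm⟩ m' ⟨hm'M, hc'm'⟩
  refine ⟨hm'M, by_contra fun hcm' => ?_⟩
  exact not_adj_of_commonNeighbor hstable hpar (hM hmM) (hM hm'M) hv
    (by rintro rfl; exact hcm' hcm) (hvM m hmM) (hvM m' hm'M)
    (adj_of_inducedP4 hstable hpar (hM hmM) (hM hm'M) hc hc' hcm hcc' hc'm'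
      (fun h => hc'm ⟨hmM, h⟩) hcm')

end ParityEncoding

theorem stmt4_general [Fintype V] (G : SimpleGraph V) (A B : Set V)
    (hAB : Disjoint A B)
    (hstable : ∀ x ∈ A, ∀ y ∈ A, ¬ G.Adj x y)
    (H : SimpleGraph V)
    (hpar : ∀ u v : V, u ∈ A → v ∈ A → u ≠ v → ∀ p : G.Walk u v,
       IsInducedPath G p → InteriorIn G p Aᶜ → (H.Adj u v ↔ Odd p.length))
    (C : Finset V) (hCB : ↑C ⊆ B) (hCclique : G.IsNClique (G.cliqueNum) C)
    (M : Set V) (hM : M ⊆ A) (hCM : ∀ c ∈ C, ∃ m ∈ M, G.Adj c m) :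
    ∀ v ∈ C, ∃ m ∈ M, ¬ G.Adj v m := by
  intro v hv
  by_contra! hvM
  have hCA : ∀ c ∈ C, c ∉ A := fun c hc hcA => Set.disjoint_left.1 hAB hcA (hCB hc)
  obtain ⟨m, hm⟩ := Finset.exists_forall_mem_of_pairwise_subset_or_subset ⟨v, hv⟩
    (fun c => M ∩ G.neighborSet c) (fun c hc => hCM c hc)
    fun c hc c' hc' hne => neighborSet_inter_subset_or_subset hstable hpar hM (hCA v hv) hvM
      (hCA c hc) (hCA c' hc') (hCclique.1 hc hc' hne)
  exact hCclique.not_forall_adj_of_cliqueNum m fun c hc => (hm c hc).2.symm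

theorem stmt4 [Fintype V] (G : SimpleGraph V) (A B : Set V)
    (hpart : A ∪ B = Set.univ) (hAB : Disjoint A B)
    (hstable : ∀ x ∈ A, ∀ y ∈ A, ¬ G.Adj x y)
    (hnbr : ∀ b ∈ B, ∃ a ∈ A, G.Adj b a)
    (H : SimpleGraph V) (hco : IsCograph H)
    (hHA : ∀ x y, H.Adj x y → x ∈ A ∧ y ∈ A)
    (hpar : ∀ u v : V, u ∈ A → v ∈ A → u ≠ v → ∀ p : G.Walk u v,
       IsInducedPath G p → InteriorIn G p Aᶜ → (H.Adj u v ↔ Odd p.length))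
    (C : Finset V) (hCB : ↑C ⊆ B) (hCclique : G.IsNClique (G.cliqueNum) C)
    (M : Set V) (hM : M ⊆ A) (hCM : ∀ c ∈ C, ∃ m ∈ M, G.Adj c m) :
    ∀ v ∈ C, ∃ m ∈ M, ¬ G.Adj v m :=
  stmt4_general G A B hAB hstable H hpar C hCB hCclique M hM hCM
end

section
/- There is a sequence of graphs (G_k) with no odd holes such that ω(G_k) = 3^k and χ(G_k) ≥ (7/2)^k for all k ≥ 0; in particular, for every α < log(7/2)/log 3 there exist graphs G with no odd hole and χ(G) ≥ ω(G)^α with ω(G) arbitrarily large. The construction: G_0 is a single vertex, and G_k is obtained from G_(k−1) by substituting a copy of the complement of the 7-cycle for each vertex. -/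
open SimpleGraph

universe u

variable {V : Type u}

/-!
Substituting a graph for every vertex of another multiplies clique numbers and, since the
complement of a substitution is the substitution of the complements, also stability numbers.
Iterating the substitution of `C₇ᶜ` (with `ω = 3`, `α = 2`) therefore gives graphs on `7 ^ k`
vertices with `ω = 3 ^ k` and `α = 2 ^ k`, so `χ ≥ 7 ^ k / 2 ^ k`.

No odd hole is created. The copies of the inner graph meet an induced cycle `C` in homogeneous
sets of `C`, and a cycle of length at least five has no homogeneous set with two vertices other
than the whole cycle. So `C` lies inside one copy, or meets every copy at most once and then
projects to an induced cycle of the outer graph. Finally `C₇ᶜ` has no induced `C₅` and, as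
`α(C₇ᶜ) = 2`, no induced `C₇`.
-/

universe v

open Finset

namespace SimpleGraph

variable {A B W : Type*} {G : SimpleGraph A} {H : SimpleGraph B}

/-- `lexProd G H` is `G` with a copy of `H` substituted for every vertex. -/
def lexProd (G : SimpleGraph A) (H : SimpleGraph B) : SimpleGraph (A × B) where
  Adj x y := G.Adj x.1 y.1 ∨ (x.1 = y.1 ∧ H.Adj x.2 y.2)
  symm := ⟨fun x y (h : G.Adj x.1 y.1 ∨ (x.1 = y.1 ∧ H.Adj x.2 y.2)) =>
    h.imp Adj.symm fun h => ⟨h.1.symm, h.2.symm⟩⟩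
  loopless := ⟨fun x (h : G.Adj x.1 x.1 ∨ (x.1 = x.1 ∧ H.Adj x.2 x.2)) =>
    h.elim G.irrefl fun h => H.irrefl h.2⟩

@[simp] lemma lexProd_adj {x y : A × B} :
    (lexProd G H).Adj x y ↔ G.Adj x.1 y.1 ∨ (x.1 = y.1 ∧ H.Adj x.2 y.2) := Iff.rfl

lemma compl_lexProd : (lexProd G H)ᶜ = lexProd Gᶜ Hᶜ := by
  ext x y
  simp only [compl_adj, lexProd_adj, ne_eq, Prod.ext_iff]
  by_cases h : x.1 = y.1 <;> simp [h]

lemma IsClique.lexProd_prod {s : Set A} {t : Set B} (hs : G.IsClique s) (ht : H.IsClique t) :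
    (lexProd G H).IsClique (s ×ˢ t) := by
  rintro ⟨a, b⟩ ⟨ha, hb⟩ ⟨a', b'⟩ ⟨ha', hb'⟩ hne
  by_cases h : a = a'
  · subst h
    exact Or.inr ⟨rfl, ht hb hb' fun h => hne (Prod.ext rfl h)⟩
  · exact Or.inl (hs ha ha' h)

lemma IsClique.card_le_cliqueNum_mul_cliqueNum [Finite A] [Finite B] {u : Finset (A × B)}
    (hu : (lexProd G H).IsClique u) : #u ≤ G.cliqueNum * H.cliqueNum := by
  classical
  have fiber_le (c : A) : #{x ∈ u | x.1 = c} ≤ H.cliqueNum := by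
    set F := {x ∈ u | x.1 = c}
    have hF : ∀ x ∈ F, x.1 = c := fun x hx => (Finset.mem_filter.1 hx).2
    have hinj : Set.InjOn Prod.snd F := fun x hx y hy h =>
      Prod.ext ((hF x hx).trans (hF y hy).symm) h
    rw [← Finset.card_image_of_injOn hinj]
    refine IsClique.card_le_cliqueNum (tc := ?_)
    simp only [Finset.coe_image]
    rintro _ ⟨x, hx, rfl⟩ _ ⟨y, hy, rfl⟩ hne
    have hxy := hu (filter_subset _ _ hx) (filter_subset _ _ hy) fun h => hne (by rw [h])
    simpa [hF x hx, hF y hy, G.irrefl] using hxy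
  have image_le : #(u.image Prod.fst) ≤ G.cliqueNum := by
    refine IsClique.card_le_cliqueNum (tc := ?_)
    simp only [Finset.coe_image]
    rintro _ ⟨x, hx, rfl⟩ _ ⟨y, hy, rfl⟩ hne
    simpa [hne] using hu hx hy (fun h => hne (by rw [h]))
  calc #u ≤ H.cliqueNum * #(u.image Prod.fst) :=
        Finset.card_le_mul_card_image _ _ fun c _ => fiber_le c
    _ ≤ H.cliqueNum * G.cliqueNum := by gcongr
    _ = G.cliqueNum * H.cliqueNum := mul_comm _ _

lemma cliqueNum_lexProd [Finite A] [Finite B] :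
    (lexProd G H).cliqueNum = G.cliqueNum * H.cliqueNum := by
  classical
  obtain ⟨u, hu⟩ := (lexProd G H).exists_isNClique_cliqueNum
  obtain ⟨s, hs⟩ := G.exists_isNClique_cliqueNum
  obtain ⟨t, ht⟩ := H.exists_isNClique_cliqueNum
  refine le_antisymm (hu.card_eq ▸ hu.isClique.card_le_cliqueNum_mul_cliqueNum) ?_
  have hst : (lexProd G H).IsClique (s ×ˢ t : Finset (A × B)) := by
    rw [Finset.coe_product]
    exact hs.isClique.lexProd_prod ht.isClique
  rw [← hs.card_eq, ← ht.card_eq, ← Finset.card_product]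
  exact hst.card_le_cliqueNum

lemma indepNum_lexProd [Finite A] [Finite B] :
    (lexProd G H).indepNum = G.indepNum * H.indepNum := by
  rw [← cliqueNum_compl, compl_lexProd, cliqueNum_lexProd, cliqueNum_compl, cliqueNum_compl]

lemma cliqueNum_of_unique [Unique V] (G : SimpleGraph V) : G.cliqueNum = 1 := by
  obtain ⟨s, hs⟩ := G.exists_isNClique_cliqueNum
  refine le_antisymm (hs.card_eq ▸ Finset.card_le_one.2 fun _ _ _ _ => Subsingleton.elim _ _) ?_
  simpa using IsClique.card_le_cliqueNum (G := G) (t := {default}) (tc := by simp)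

lemma indepNum_of_unique [Unique V] (G : SimpleGraph V) : G.indepNum = 1 := by
  rw [← cliqueNum_compl, cliqueNum_of_unique]

lemma Colorable.card_le_indepNum_mul [Fintype V] {G : SimpleGraph V} {n : ℕ} (h : G.Colorable n) :
    Fintype.card V ≤ G.indepNum * n := by
  classical
  obtain ⟨C⟩ := h
  calc Fintype.card V = #(Finset.univ : Finset V) := Finset.card_univ.symm
    _ ≤ G.indepNum * #(Finset.univ.image C) := by
      refine Finset.card_le_mul_card_image _ _ fun c _ => IsIndepSet.card_le_indepNum ?_
      intro x hx y hy _
      simp only [Finset.coe_filter, Finset.mem_univ, true_and, Set.mem_ofPred_eq] at hx hy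
      exact C.not_adj_of_mem_colorClass hx hy
    _ ≤ G.indepNum * n := by
      gcongr
      simpa using Finset.card_le_univ (Finset.univ.image C)

lemma card_le_indepNum_mul_chromaticNumber [Fintype V] (G : SimpleGraph V) :
    (Fintype.card V : ℕ∞) ≤ G.indepNum * G.chromaticNumber := by
  have hfin : G.chromaticNumber ≠ ⊤ :=
    chromaticNumber_ne_top_iff_exists.2 ⟨_, G.colorable_of_fintype⟩
  rw [← ENat.natCast_toNat hfin]
  exact_mod_cast G.colorable_chromaticNumber_of_fintype.card_le_indepNum_mul

def IsHomogeneousSet (G : SimpleGraph V) (F : Set V) : Prop :=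
  ∀ z ∉ F, ∀ x ∈ F, ∀ y ∈ F, G.Adj z x → G.Adj z y

lemma IsHomogeneousSet.preimage {G : SimpleGraph V} {G' : SimpleGraph W} {F : Set V}
    (hF : G.IsHomogeneousSet F) (f : G' ↪g G) : G'.IsHomogeneousSet (f ⁻¹' F) :=
  fun _ hz _ hx _ hy h => f.map_adj_iff.1 (hF _ hz _ hx _ hy (f.map_adj_iff.2 h))

lemma isHomogeneousSet_lexProd_fiber (c : A) :
    (lexProd G H).IsHomogeneousSet {x | x.1 = c} := by
  rintro _ hz _ (hx : _ = c) _ (hy : _ = c) h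
  rw [lexProd_adj, hx] at h
  rw [lexProd_adj, hy]
  exact Or.inl (h.resolve_right fun h => hz h.1)

lemma _root_.Fin.exists_mem_add_one_notMem {n : ℕ} {F : Set (Fin (n + 1))}
    (hF : F.Nonempty) (hne : F ≠ Set.univ) : ∃ i ∈ F, i + 1 ∉ F := by
  by_contra! hclosed
  obtain ⟨a, ha⟩ := hF
  have hshift (d : Fin (n + 1)) : a + d ∈ F := by
    induction d using Fin.induction with
    | zero => simpa using ha
    | succ d ih => simpa [← Fin.coeSucc_eq_succ, add_assoc] using hclosed _ ih
  exact hne (Set.eq_univ_of_forall fun c => by simpa using hshift (c - a))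

lemma cycleGraph_adj_iff_eq_add_one {n : ℕ} {x y : Fin (n + 2)} :
    (cycleGraph (n + 2)).Adj x y ↔ x = y + 1 ∨ y = x + 1 := by
  rw [cycleGraph_adj, sub_eq_iff_eq_add', sub_eq_iff_eq_add']

lemma IsHomogeneousSet.eq_univ_of_cycleGraph {n : ℕ} (hn : 5 ≤ n) {F : Set (Fin n)}
    (hF : (cycleGraph n).IsHomogeneousSet F) {a b : Fin n} (ha : a ∈ F) (hb : b ∈ F)
    (hab : a ≠ b) : F = Set.univ := by
  obtain ⟨k, rfl⟩ : ∃ k, n = k + 5 := ⟨n - 5, by omega⟩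
  by_contra hne
  obtain ⟨i, hi, hi1⟩ := Fin.exists_mem_add_one_notMem ⟨a, ha⟩ hne
  -- `i + 1 ∉ F` is adjacent to `i ∈ F`, hence to all of `F`, so `F = {i, i + 2}`; then
  -- `i + 3 ∉ F` is adjacent to `i + 2` but not to `i`.
  have hsub : ∀ x ∈ F, x = i ∨ x = i + 2 := fun x hx => by
    have := hF _ hi1 _ hi _ hx (cycleGraph_adj_iff_eq_add_one.2 (Or.inl rfl))
    rw [cycleGraph_adj_iff_eq_add_one] at this
    rcases this with h | h
    · exact Or.inl (add_right_cancel h).symm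
    · refine Or.inr (h.trans ?_)
      simp (disch := omega) [add_assoc, Fin.ext_iff, Fin.val_add, Nat.mod_eq_of_lt]
  have hi2 : i + 2 ∈ F := by
    rcases hsub a ha with rfl | rfl
    · rcases hsub b hb with rfl | rfl
      exacts [absurd rfl hab, hb]
    · exact ha
  have hi3 : i + 3 ∉ F := fun h => by
    rcases hsub _ h with h | h <;> simp (disch := omega) [Fin.ext_iff, Nat.mod_eq_of_lt] at h
  have := hF _ hi3 _ hi2 _ hi (cycleGraph_adj_iff_eq_add_one.2 (Or.inl (by
    simp (disch := omega) [add_assoc, Fin.ext_iff, Fin.val_add, Nat.mod_eq_of_lt])))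
  rw [cycleGraph_adj_iff_eq_add_one] at this
  rcases this with h | h <;>
    simp (disch := omega) [add_assoc, Fin.ext_iff, Fin.val_add, Nat.mod_eq_of_lt] at h

lemma IsIndContained.cycleGraph_lexProd {n : ℕ} (hn : 5 ≤ n)
    (h : cycleGraph n ⊴ lexProd G H) :
    cycleGraph n ⊴ G ∨ cycleGraph n ⊴ H := by
  obtain ⟨f⟩ := h
  by_cases hinj : Function.Injective fun x => (f x).1
  · refine Or.inl ⟨⟨⟨_, hinj⟩, fun {x y} => ?_⟩⟩
    rw [← f.map_adj_iff, lexProd_adj, Function.Embedding.coeFn_mk, or_iff_left]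
    rintro ⟨h1, h2⟩
    obtain rfl := hinj h1
    exact H.irrefl h2
  · obtain ⟨a, b, hfab, hab⟩ : ∃ a b, (f a).1 = (f b).1 ∧ a ≠ b := by
      simpa [Function.Injective] using hinj
    have hfib := ((isHomogeneousSet_lexProd_fiber (H := H) (f a).1).preimage f
      ).eq_univ_of_cycleGraph hn (by simp) (by simp [hfab]) hab
    have hfst (x : Fin n) : (f x).1 = (f a).1 := (Set.eq_univ_iff_forall.1 hfib x :)
    refine Or.inr
      ⟨⟨⟨fun x => (f x).2, fun x y h => f.injective (Prod.ext ?_ h)⟩, fun {x y} => ?_⟩⟩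
    · rw [hfst x, hfst y]
    · rw [← f.map_adj_iff, lexProd_adj, hfst x, hfst y]
      exact ((or_iff_right G.irrefl).trans (and_iff_right (Eq.refl _))).symm

lemma Walk.IsCycle.cycleGraph_isIndContained {G : SimpleGraph V} {v : V} {p : G.Walk v v}
    (hc : p.IsCycle) (hind : IsInducedWalk G p) : cycleGraph p.length ⊴ G := by
  obtain ⟨k, hk⟩ : ∃ k, p.length = k + 2 :=
    ⟨p.length - 2, by have := hc.three_le_length; omega⟩
  rw [hk]
  let f (a : Fin (k + 2)) : V := p.getVert a
  have getVert_succ (a : Fin (k + 2)) : p.getVert (a + 1) = f (a + 1) := by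
    rcases Fin.eq_castSucc_or_eq_last a with ⟨a, rfl⟩ | rfl
    · simp [f]
    · simp [f, ← hk]
  have f_inj : Function.Injective f := fun a b h =>
    Fin.ext (hc.getVert_injOn' (by simp; omega) (by simp; omega) h)
  refine ⟨⟨⟨f, f_inj⟩, fun {a b} => ?_⟩⟩
  simp only [Function.Embedding.coeFn_mk, cycleGraph_adj_iff_eq_add_one]
  constructor
  · intro hab
    obtain ⟨i, hi, hlt⟩ := p.toSubgraph_adj_iff.1
      (hind _ (p.getVert_mem_support _) _ (p.getVert_mem_support _) hab)
    rw [show i = (⟨i, hk ▸ hlt⟩ : Fin (k + 2)) from rfl, getVert_succ] at hi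
    rcases Sym2.eq_iff.1 hi with ⟨h1, h2⟩ | ⟨h1, h2⟩
    · exact Or.inr (by rw [← f_inj h1, ← f_inj h2])
    · exact Or.inl (by rw [← f_inj h1, ← f_inj h2])
  · have adj_succ (c : Fin (k + 2)) : G.Adj (f c) (f (c + 1)) := by
      rw [← getVert_succ]
      exact p.adj_getVert_succ (by omega)
    rintro (rfl | rfl)
    exacts [(adj_succ b).symm, adj_succ a]

def IsOddHoleFree (G : SimpleGraph V) : Prop :=
  ∀ n, 5 ≤ n → Odd n → ¬ cycleGraph n ⊴ G

lemma IsOddHoleFree.not_hasOddHole {G : SimpleGraph V} (h : G.IsOddHoleFree) : ¬ HasOddHole G :=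
  fun ⟨_, _, hc, hind, hodd, hlen⟩ => h _ hlen hodd (hc.cycleGraph_isIndContained hind)

lemma IsOddHoleFree.lexProd (hG : G.IsOddHoleFree) (hH : H.IsOddHoleFree) :
    (lexProd G H).IsOddHoleFree := fun n hn hodd h =>
  (h.cycleGraph_lexProd hn).elim (hG n hn hodd) (hH n hn hodd)

section ComplCycleSeven

local notation "C₇ᶜ" => (cycleGraph 7)ᶜ

lemma cliqueNum_compl_cycleGraph_seven : C₇ᶜ.cliqueNum = 3 := by
  obtain ⟨s, hs⟩ := C₇ᶜ.exists_isNClique_cliqueNum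
  have clique_le : ∀ s : Finset (Fin 7), C₇ᶜ.IsClique (s : Set (Fin 7)) → #s ≤ 3 := by
    decide +kernel
  refine le_antisymm (hs.card_eq ▸ clique_le s hs.isClique) ?_
  exact IsClique.card_le_cliqueNum (G := C₇ᶜ) (t := {0, 2, 4}) (tc := by decide +kernel)

lemma indepNum_compl_cycleGraph_seven : C₇ᶜ.indepNum = 2 := by
  obtain ⟨s, hs⟩ := C₇ᶜ.exists_isNIndepSet_indepNum
  have indep_le : ∀ s : Finset (Fin 7), C₇ᶜ.IsIndepSet (s : Set (Fin 7)) → #s ≤ 2 := by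
    decide +kernel
  refine le_antisymm (hs.card_eq ▸ indep_le s hs.isIndepSet) ?_
  exact IsIndepSet.card_le_indepNum (G := C₇ᶜ) (t := {0, 1}) (by decide +kernel)

lemma isOddHoleFree_compl_cycleGraph_seven : C₇ᶜ.IsOddHoleFree := by
  rintro n hn hodd ⟨f⟩
  have hn7 : n ≤ 7 := by simpa using Fintype.card_le_of_injective f f.injective
  interval_cases n
  · have no_c5 : ∀ a b c d e : Fin 7, ¬ (C₇ᶜ.Adj a b ∧ C₇ᶜ.Adj b c ∧ C₇ᶜ.Adj c d ∧ C₇ᶜ.Adj d e ∧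
        C₇ᶜ.Adj e a ∧ ¬ C₇ᶜ.Adj a c ∧ ¬ C₇ᶜ.Adj a d ∧ ¬ C₇ᶜ.Adj b d ∧ ¬ C₇ᶜ.Adj b e ∧
        ¬ C₇ᶜ.Adj c e) := by
      decide +kernel
    have := no_c5 (f 0) (f 1) (f 2) (f 3) (f 4)
    simp only [f.map_adj_iff] at this
    exact this (by decide)
  · exact absurd hodd (by decide)
  · have no_indep3 : ∀ a b c : Fin 7, a ≠ b → a ≠ c → b ≠ c →
        C₇ᶜ.Adj a b ∨ C₇ᶜ.Adj a c ∨ C₇ᶜ.Adj b c := by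
      decide +kernel
    have := no_indep3 (f 0) (f 2) (f 4)
    simp only [f.map_adj_iff, ne_eq, f.injective.eq_iff] at this
    exact absurd (this (by decide) (by decide) (by decide)) (by decide)

end ComplCycleSeven

def LexPowVert (A : Type v) : ℕ → Type v
  | 0 => PUnit
  | k + 1 => LexPowVert A k × A

instance LexPowVert.instFintype (A : Type v) [Fintype A] : ∀ k, Fintype (LexPowVert A k)
  | 0 => inferInstanceAs (Fintype PUnit)
  | k + 1 => letI := LexPowVert.instFintype A k; inferInstanceAs (Fintype (LexPowVert A k × A))

def lexPow {A : Type v} (G : SimpleGraph A) : ∀ k, SimpleGraph (LexPowVert A k)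
  | 0 => ⊥
  | k + 1 => lexProd (lexPow G k) G

variable {A : Type v} [Fintype A] (G : SimpleGraph A)

lemma card_lexPowVert : ∀ k, Fintype.card (LexPowVert A k) = Fintype.card A ^ k
  | 0 => rfl
  | k + 1 => by
    rw [pow_succ, ← card_lexPowVert k]
    exact Fintype.card_prod _ _

lemma cliqueNum_lexPow : ∀ k, (lexPow G k).cliqueNum = G.cliqueNum ^ k
  | 0 => cliqueNum_of_unique (V := PUnit) ⊥
  | k + 1 => (cliqueNum_lexProd (G := G.lexPow k)).trans (by rw [cliqueNum_lexPow k, pow_succ])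

lemma indepNum_lexPow : ∀ k, (lexPow G k).indepNum = G.indepNum ^ k
  | 0 => indepNum_of_unique (V := PUnit) ⊥
  | k + 1 => (indepNum_lexProd (G := G.lexPow k)).trans (by rw [indepNum_lexPow k, pow_succ])

variable {G} in
lemma IsOddHoleFree.lexPow (hG : G.IsOddHoleFree) : ∀ k, (G.lexPow k).IsOddHoleFree
  | 0 => fun n hn _ ⟨f⟩ => by
    have := Fintype.card_le_of_injective f f.injective
    simp only [Fintype.card_fin, card_lexPowVert, pow_zero] at this
    omega
  | k + 1 => (hG.lexPow k).lexProd hG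

end SimpleGraph

lemma Real.rpow_le_of_lt_log_div_log {a b α : ℝ} (ha : 1 < a) (hb : 0 < b)
    (h : α < Real.log b / Real.log a) : a ^ α ≤ b := by
  rw [lt_div_iff₀ (Real.log_pos ha)] at h
  exact ((Real.rpow_lt_iff_lt_log (by linarith) hb).2 h).le

theorem stmt11 :
    ∃ (W : ℕ → Type) (_ : ∀ k, Fintype (W k)) (G : ∀ k, SimpleGraph (W k)),
      (∀ k, ¬ HasOddHole (G k)) ∧
      (∀ k, (G k).cliqueNum = 3 ^ k) ∧
      (∀ k, ((7 ^ k : ℕ) : ℕ∞) ≤ ((2 ^ k : ℕ) : ℕ∞) * (G k).chromaticNumber) ∧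
      (∀ α : ℝ, α < Real.log (7 / 2) / Real.log 3 → ∀ N : ℕ, ∃ k,
         N ≤ (G k).cliqueNum ∧
         ∀ n : ℕ, (G k).Colorable n → ((G k).cliqueNum : ℝ) ^ α ≤ (n : ℝ)) := by
  have cliqueNum_eq (k : ℕ) : ((cycleGraph 7)ᶜ.lexPow k).cliqueNum = 3 ^ k := by
    rw [cliqueNum_lexPow, cliqueNum_compl_cycleGraph_seven]
  have card_eq (k : ℕ) : Fintype.card (LexPowVert (Fin 7) k) = 7 ^ k := by
    rw [card_lexPowVert, Fintype.card_fin]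
  have indepNum_eq (k : ℕ) : ((cycleGraph 7)ᶜ.lexPow k).indepNum = 2 ^ k := by
    rw [indepNum_lexPow, indepNum_compl_cycleGraph_seven]
  refine ⟨LexPowVert (Fin 7), LexPowVert.instFintype (Fin 7), (cycleGraph 7)ᶜ.lexPow,
    fun k => (isOddHoleFree_compl_cycleGraph_seven.lexPow k).not_hasOddHole, cliqueNum_eq,
    fun k => ?_, fun α hα N => ⟨N, ?_, fun n hn => ?_⟩⟩
  · simpa only [card_eq, indepNum_eq] using
      card_le_indepNum_mul_chromaticNumber ((cycleGraph 7)ᶜ.lexPow k)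
  · rw [cliqueNum_eq]
    exact (Nat.lt_pow_self (by norm_num)).le
  · have hcard := hn.card_le_indepNum_mul
    rw [card_eq, indepNum_eq] at hcard
    replace hcard : (7 : ℝ) ^ N ≤ 2 ^ N * n := by exact_mod_cast hcard
    rw [cliqueNum_eq]
    calc ((3 ^ N : ℕ) : ℝ) ^ α = ((3 : ℝ) ^ α) ^ N := by
          push_cast
          rw [Real.rpow_pow_comm (by norm_num)]
      _ ≤ (7 / 2) ^ N := by
          gcongr
          exact Real.rpow_le_of_lt_log_div_log (by norm_num) (by norm_num) hα
      _ ≤ n := by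
          rw [div_pow, div_le_iff₀ (by positivity)]
          linarith
end

section
/- If a graph G has no odd hole, (L0, …, Lk) is a levelling in G with G[Lk] connected, and u, v are distinct vertices of L(k−1) each having a neighbour in Lk, with L(k−1) stable, then all induced paths between u and v with interior contained in L0 ∪ ⋯ ∪ L(k−2) have the same parity. -/
open SimpleGraph

universe u

variable {V : Type u}

/-!
Join `u` and `v` by an induced path `r` through the connected level `L k` (a shortest path in
`G[{u} ∪ L k ∪ {v}]`). The levels below `k - 1` have no neighbours in `L k` and `u`, `v` are
non-adjacent, so `r` followed by any induced `u`–`v` path through those lower levels backwards is a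
hole of length at least four. As `G` has no odd hole, every such path has the parity of `r`.
-/

namespace SimpleGraph.Walk

variable {V' : Type*} {G : SimpleGraph V} {u v : V} {p q : G.Walk u v}

theorem isInducedWalk_iff_isChordless : IsInducedWalk G p ↔ p.IsChordless := by
  simp only [IsInducedWalk, isChordless_iff_forall_mem_edges, ← mem_edges_toSubgraph,
    Subgraph.mem_edgeSet]
  exact ⟨fun h _ _ hx hy ↦ h _ hx _ hy, fun h _ hx _ hy ↦ h hx hy⟩

theorem two_le_length_of_not_adj (p : G.Walk u v) (hne : u ≠ v) (hnadj : ¬G.Adj u v) :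
    2 ≤ p.length := by
  by_contra! h
  obtain h | h : p.length = 0 ∨ p.length = 1 := by omega
  · exact hne (eq_of_length_eq_zero h)
  · exact hnadj (adj_of_length_eq_one h)

theorem isChordless_of_length_eq_dist (p : G.Walk u v) (hp : p.length = G.dist u v) :
    p.IsChordless := by
  -- a chord between positions `i` and `j ≥ i + 2` would shortcut `p`
  have shortcut : ∀ i j, i ≤ j → j ≤ p.length → G.Adj (p.getVert i) (p.getVert j) →
      j = i + 1 := by
    intro i j hij hj hadj
    have := G.dist_le ((p.take i).append (cons hadj (p.drop j)))
    simp only [length_append, length_cons, take_length, drop_length] at this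
    have : i ≠ j := by rintro rfl; exact hadj.ne rfl
    omega
  rw [← isInducedWalk_iff_isChordless]
  intro x hx y hy hadj
  obtain ⟨i, rfl, hi⟩ := mem_support_iff_exists_getVert.mp hx
  obtain ⟨j, rfl, hj⟩ := mem_support_iff_exists_getVert.mp hy
  rcases le_total i j with hij | hji
  · obtain rfl := shortcut i j hij hj hadj
    exact p.toSubgraph_adj_getVert (by omega)
  · obtain rfl := shortcut j i hji hi hadj.symm
    exact (p.toSubgraph_adj_getVert (by omega)).symm

theorem IsChordless.map_embedding {G' : SimpleGraph V'} (f : G ↪g G') (hp : p.IsChordless) :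
    (p.map f.toHom).IsChordless := by
  rw [isChordless_iff_forall_mem_edges] at hp ⊢
  intro x y hx hy hadj
  simp only [support_map, List.mem_map] at hx hy
  obtain ⟨a, ha, rfl⟩ := hx
  obtain ⟨b, hb, rfl⟩ := hy
  rw [edges_map]
  exact List.mem_map_of_mem (hp ha hb (f.map_adj_iff.mp hadj))

theorem IsPath.start_notMem_tail_support (hp : p.IsPath) : u ∉ p.support.tail := by
  have := hp.support_nodup
  rw [← cons_tail_support] at this
  exact (List.nodup_cons.mp this).1

theorem IsPath.isCycle_append_reverse (hp : p.IsPath) (hq : q.IsPath) (hne : u ≠ v)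
    (hnadj : ¬G.Adj u v) (hcommon : ∀ x ∈ p.support, x ∈ q.support → x = u ∨ x = v) :
    (p.append q.reverse).IsCycle := by
  refine hp.isCycle_append hq.reverse (fun x hxp hxq ↦ ?_)
    (Or.inl (p.two_le_length_of_not_adj hne hnadj))
  have hxq' : x ∈ q.support := by simpa using List.mem_of_mem_tail hxq
  rcases hcommon x (List.mem_of_mem_tail hxp) hxq' with rfl | rfl
  · exact hp.start_notMem_tail_support hxp
  · exact hq.reverse.start_notMem_tail_support hxq

theorem IsChordless.append_reverse {A B : Set V} (hp : p.IsChordless) (hq : q.IsChordless)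
    (hpA : InteriorIn G p A) (hqB : InteriorIn G q B) (hAB : ∀ a ∈ A, ∀ b ∈ B, ¬G.Adj a b) :
    (p.append q.reverse).IsChordless := by
  have cross : ∀ x ∈ p.support, ∀ y ∈ q.support, G.Adj x y →
      s(x, y) ∈ p.edges ∨ s(x, y) ∈ q.edges := by
    intro x hx y hy hadj
    by_cases hxq : x ∈ q.support
    · exact .inr (hq.mem_edges hxq hy hadj)
    by_cases hyp : y ∈ p.support
    · exact .inl (hp.mem_edges hx hyp hadj)
    have hxA := hpA x hx (by rintro rfl; simp at hxq) (by rintro rfl; simp at hxq)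
    have hyB := hqB y hy (by rintro rfl; simp at hyp) (by rintro rfl; simp at hyp)
    exact absurd hadj (hAB x hxA y hyB)
  rw [isChordless_iff_forall_mem_edges]
  intro x y hx hy hadj
  simp only [mem_support_append_iff, support_reverse, List.mem_reverse] at hx hy
  simp only [edges_append, edges_reverse, List.mem_append, List.mem_reverse]
  rcases hx with hx | hx <;> rcases hy with hy | hy
  · exact .inl (hp.mem_edges hx hy hadj)
  · exact cross x hx y hy hadj
  · simpa [Sym2.eq_swap, or_comm] using cross y hy x hx hadj.symm
  · exact .inr (hq.mem_edges hx hy hadj)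

end SimpleGraph.Walk

section
variable {G : SimpleGraph V} {u v : V}

theorem isInducedPath_iff_isPath_and_isChordless {p : G.Walk u v} :
    IsInducedPath G p ↔ p.IsPath ∧ p.IsChordless := by
  rw [IsInducedPath, Walk.isInducedWalk_iff_isChordless]

theorem even_length_add_of_not_hasOddHole (hG : ¬HasOddHole G) {p q : G.Walk u v}
    (hp : IsInducedPath G p) (hq : IsInducedPath G q) (hne : u ≠ v) (hnadj : ¬G.Adj u v)
    {A B : Set V} (hpA : InteriorIn G p A) (hqB : InteriorIn G q B) (hdisj : Disjoint A B)
    (hAB : ∀ a ∈ A, ∀ b ∈ B, ¬G.Adj a b) :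
    Even (p.length + q.length) := by
  rw [isInducedPath_iff_isPath_and_isChordless] at hp hq
  have hcommon : ∀ x ∈ p.support, x ∈ q.support → x = u ∨ x = v := by
    intro x hxp hxq
    by_contra! hx
    exact Set.disjoint_left.mp hdisj (hpA x hxp hx.1 hx.2) (hqB x hxq hx.1 hx.2)
  by_contra hodd
  rw [Nat.not_even_iff_odd] at hodd
  have hp2 := p.two_le_length_of_not_adj hne hnadj
  have hq2 := q.two_le_length_of_not_adj hne hnadj
  refine hG ⟨u, p.append q.reverse, hp.1.isCycle_append_reverse hq.1 hne hnadj hcommon,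
    Walk.isInducedWalk_iff_isChordless.mpr (hp.2.append_reverse hq.2 hpA hqB hAB), ?_, ?_⟩
  · simpa using hodd
  · obtain ⟨m, hm⟩ := hodd
    simp only [Walk.length_append, Walk.length_reverse]
    omega

theorem exists_isInducedPath_support_subset {T : Set V} (hT : (G.induce T).Connected)
    (hu : u ∈ T) (hv : v ∈ T) : ∃ r : G.Walk u v, IsInducedPath G r ∧ ∀ z ∈ r.support, z ∈ T := by
  obtain ⟨w, hw⟩ := hT.exists_walk_length_eq_dist ⟨u, hu⟩ ⟨v, hv⟩
  have hwT : ∀ z ∈ (w.map (Embedding.induce (G := G) T).toHom).support, z ∈ T := by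
    simp only [Walk.support_map, List.mem_map]
    rintro _ ⟨z, -, rfl⟩
    exact z.2
  exact ⟨_, isInducedPath_iff_isPath_and_isChordless.mpr
    ⟨(w.isPath_of_length_eq_dist hw).map Subtype.val_injective,
      (w.isChordless_of_length_eq_dist hw).map_embedding _⟩, hwT⟩

theorem exists_isInducedPath_interiorIn_of_connected {S : Set V} (hS : (G.induce S).Connected)
    {x y : V} (hx : x ∈ S) (hy : y ∈ S) (hux : G.Adj u x) (hyv : G.Adj y v) :
    ∃ r : G.Walk u v, IsInducedPath G r ∧ InteriorIn G r S := by
  have huS : (G.induce ({u} ∪ S)).Connected :=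
    connected_induce_union (s := {u}) Preconnected.of_subsingleton hS.preconnected rfl hx hux
  have huSv : (G.induce ({u} ∪ S ∪ {v})).Connected := connected_induce_union (t := {v})
    huS.preconnected Preconnected.of_subsingleton (Or.inr hy) rfl hyv
  obtain ⟨r, hr, hrT⟩ :=
    exists_isInducedPath_support_subset (u := u) (v := v) huSv (by simp) (by simp)
  refine ⟨r, hr, fun z hz hzu hzv ↦ ?_⟩
  simpa [hzu, hzv] using hrT z hz

end

namespace IsLevelling

variable {G : SimpleGraph V} {k : ℕ} {L : ℕ → Set V}

theorem disjoint_lowerLevels (hL : IsLevelling G k L) :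
    Disjoint (lowerLevels L (k - 1)) (L k) := by
  simp only [lowerLevels, Set.disjoint_iUnion_left, Finset.mem_range]
  exact fun i hi ↦ hL.1 i k (by omega) le_rfl (by omega)

theorem not_adj_lowerLevels (hL : IsLevelling G k L) :
    ∀ a ∈ lowerLevels L (k - 1), ∀ b ∈ L k, ¬G.Adj a b := by
  simp only [lowerLevels, Set.mem_iUnion, Finset.mem_range]
  rintro a ⟨i, hi, ha⟩ b hb
  exact (hL.2.2 k (by omega) le_rfl b hb).2 i (by omega) a ha

end IsLevelling

theorem stmt13_general (G : SimpleGraph V) (k : ℕ) (L : ℕ → Set V)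
    (hnoodd : ¬ HasOddHole G) (hlev : IsLevelling G k L)
    (hconn : (G.induce (L k)).Connected)
    (hstable : ∀ x ∈ L (k - 1), ∀ y ∈ L (k - 1), ¬ G.Adj x y)
    (u v : V) (hu : u ∈ L (k - 1)) (hv : v ∈ L (k - 1)) (huv : u ≠ v)
    (hun : ∃ x ∈ L k, G.Adj u x) (hvn : ∃ x ∈ L k, G.Adj v x)
    (p q : G.Walk u v)
    (hp : IsInducedPath G p) (hpint : InteriorIn G p (lowerLevels L (k - 1)))
    (hq : IsInducedPath G q) (hqint : InteriorIn G q (lowerLevels L (k - 1))) :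
    (Odd p.length ↔ Odd q.length) := by
  obtain ⟨x, hx, hux⟩ := hun
  obtain ⟨y, hy, hvy⟩ := hvn
  obtain ⟨r, hr, hrint⟩ :=
    exists_isInducedPath_interiorIn_of_connected hconn hx hy hux hvy.symm
  have even_length_add_r : ∀ p' : G.Walk u v, IsInducedPath G p' →
      InteriorIn G p' (lowerLevels L (k - 1)) → Even (p'.length + r.length) := fun p' hp' hint ↦
    even_length_add_of_not_hasOddHole hnoodd hp' hr huv (hstable u hu v hv) hint hrint
      hlev.disjoint_lowerLevels hlev.not_adj_lowerLevels
  have hpr := even_length_add_r p hp hpint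
  have hqr := even_length_add_r q hq hqint
  rw [Nat.even_add] at hpr hqr
  simp only [← Nat.not_even_iff_odd, hpr, hqr]

theorem stmt13 [Fintype V] (G : SimpleGraph V) (k : ℕ) (L : ℕ → Set V)
    (hnoodd : ¬ HasOddHole G) (hlev : IsLevelling G k L)
    (hconn : (G.induce (L k)).Connected)
    (hstable : ∀ x ∈ L (k - 1), ∀ y ∈ L (k - 1), ¬ G.Adj x y)
    (u v : V) (hu : u ∈ L (k - 1)) (hv : v ∈ L (k - 1)) (huv : u ≠ v)
    (hun : ∃ x ∈ L k, G.Adj u x) (hvn : ∃ x ∈ L k, G.Adj v x)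
    (p q : G.Walk u v)
    (hp : IsInducedPath G p) (hpint : InteriorIn G p (lowerLevels L (k - 1)))
    (hq : IsInducedPath G q) (hqint : InteriorIn G q (lowerLevels L (k - 1))) :
    (Odd p.length ↔ Odd q.length) :=
  stmt13_general G k L hnoodd hlev hconn hstable u v hu hv huv hun hvn p q hp hpint hq hqint
end
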